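/- Let k : M → L be a compactification of a frame L, with ⊲ₖ and the class Cₖ as defined. Then: (i) for every compact regular frame L' and every frame homomorphism f : L' → L belonging to Cₖ, there exists a unique frame homomorphism g : L' → M with f = k ∘ g; (ii) k is the minimal compactification with this extension property: if k' : M' → L is another compactification such that every f : L' → L in Cₖ factors as f = k' ∘ g' for some frame homomorphism g' : L' → M', then there exists a frame homomorphism h : M → M' with k = k' ∘ h. -/

import Mathlib

/-- The well-inside relation of a frame: `b` is well inside `a` iff `bᶜ ⊔ a = ⊤`. -/
def WellInside {L : Type*} [Order.Frame L] (b a : L) : Prop := bᶜ ⊔ a = ⊤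

/-- A frame is regular if every element is the join of the elements well inside it. -/
def IsRegularFrame (L : Type*) [Order.Frame L] : Prop :=
  ∀ a : L, a = sSup {b | WellInside b a}

/-- A frame is compact if `⊤` is a compact element. -/
def IsCompactFrame (L : Type*) [Order.Frame L] : Prop :=
  ∀ S : Set L, ⊤ ≤ sSup S → ∃ T : Set L, T ⊆ S ∧ T.Finite ∧ ⊤ ≤ sSup T

/-- A relation on `P` is closed under conditions (1)–(5) of a strong inclusion. -/
def ClosedUnder15 {L : Type*} [Order.Frame L] (P : Set L) (r : L → L → Prop) : Prop :=
  (r ⊥ ⊥ ∧ r ⊤ ⊤) ∧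
  (∀ x a b y, x ∈ P → y ∈ P → x ≤ a → r a b → b ≤ y → r x y) ∧
  (∀ x a b, r x a → r x b → r x (a ⊓ b)) ∧
  (∀ x y a, r x a → r y a → r (x ⊔ y) a) ∧
  (∀ a b, r a b → r bᶜ aᶜ)

/-- The smallest relation containing `R` and closed under conditions (1)–(5) of a
strong inclusion on `P`: the intersection of all such relations. -/
def leastClosed15 {L : Type*} [Order.Frame L] (P : Set L) (R : L → L → Prop) :
    L → L → Prop :=
  fun x y => ∀ r : L → L → Prop, (∀ a b, R a b → r a b) → ClosedUnder15 P r → r x y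

/-- The strong inclusion associated with a compactification `k : M → L`. -/
def kIncl {M L : Type*} [Order.Frame M] [Order.Frame L] (k : FrameHom M L) :
    L → L → Prop :=
  leastClosed15 Set.univ
    (fun x y => ∃ a b : M, WellInside b a ∧ x = k b ∧ y = k a)

/-- The relation `r` on `L` is finer than the frame homomorphism `f : L' → L`. -/
def Finer {L' L : Type*} [Order.Frame L'] [Order.Frame L]
    (r : L → L → Prop) (f : FrameHom L' L) : Prop :=
  ∀ x y : L', WellInside y x → ∃ p p' : L, f y ≤ p ∧ r p p' ∧ p' ≤ f x


/-!
Density of `k` gives `m ≤ a` whenever `k m ≤ k b` and `b ≺ a`, and together with surjectivity it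
makes `k` preserve pseudocomplements. Hence the relation "`p ≤ k b` and `k a ≤ q` for some
`b ≺ a` in `M`" satisfies (1)–(5), so it contains `⊲ₖ`, and every `f` in `Cₖ` sends `y ≺ x` into it.

The extension is `g x = ⋁ {m | k m ≤ f y for some y ≺ x}`. It preserves finite meets directly, and
`k ∘ g = f` by interpolating `y ≺ z ≺ x` in `L'`. It preserves joins because, `L'` being compact
and regular, `y ≺ ⋁ T` is covered by finitely many `u ≺ t` with `t ∈ T`; the witnesses in `M` of
these finitely many `u` join to a single `b ≺ a` with `a ≤ ⋁ g(T)`, and density puts every `m`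
with `k m ≤ f y` below `a`. Any `g'` with `k ∘ g' = f` agrees with `g` because `g'` preserves `≺`
and `L'` is regular. Minimality is immediate, as `k` itself lies in `Cₖ`.
-/

section WellInside

variable {α β : Type*} [Order.Frame α] [Order.Frame β]

theorem wellInside_iff_codisjoint {b a : α} : WellInside b a ↔ Codisjoint bᶜ a :=
  codisjoint_iff.symm

theorem WellInside.compl_compl_le {b a : α} (h : WellInside b a) : bᶜᶜ ≤ a :=
  (wellInside_iff_codisjoint.1 h).left_le_of_le_inf_right (by simp)

theorem WellInside.le {b a : α} (h : WellInside b a) : b ≤ a :=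
  le_compl_compl.trans h.compl_compl_le

theorem WellInside.mono {b' b a a' : α} (hb : b' ≤ b) (h : WellInside b a) (ha : a ≤ a') :
    WellInside b' a' :=
  wellInside_iff_codisjoint.2 ((wellInside_iff_codisjoint.1 h).mono (compl_le_compl hb) ha)

theorem wellInside_bot_left (a : α) : WellInside ⊥ a := by
  simp [WellInside]

theorem wellInside_top_right (b : α) : WellInside b ⊤ := by
  simp [WellInside]

theorem WellInside.sup {b a b' a' : α} (h : WellInside b a) (h' : WellInside b' a') :
    WellInside (b ⊔ b') (a ⊔ a') := by
  rw [wellInside_iff_codisjoint, compl_sup] at *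
  exact (h.mono_right le_sup_left).inf_left (h'.mono_right le_sup_right)

theorem WellInside.inf {b a b' a' : α} (h : WellInside b a) (h' : WellInside b' a') :
    WellInside (b ⊓ b') (a ⊓ a') := by
  rw [wellInside_iff_codisjoint] at *
  exact ((h.mono_left (compl_le_compl inf_le_left)).inf_right
    (h'.mono_left (compl_le_compl inf_le_right)))

theorem WellInside.compl {b a : α} (h : WellInside b a) : WellInside aᶜ bᶜ := by
  rw [WellInside, sup_comm]
  exact h.mono le_rfl le_compl_compl

theorem WellInside.finset_sup_left {ι : Type*} {s : Finset ι} {e : ι → α} {a : α}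
    (h : ∀ i ∈ s, WellInside (e i) a) : WellInside (s.sup e) a :=
  Finset.sup_induction (p := (WellInside · a)) (wellInside_bot_left a)
    (fun _ h₁ _ h₂ => by simpa using h₁.sup h₂) h

theorem map_compl_le {F : Type*} [FunLike F α β] [FrameHomClass F α β] (f : F) (a : α) :
    f aᶜ ≤ (f a)ᶜ := by
  rw [le_compl_iff_disjoint_right, disjoint_iff, ← map_inf, compl_inf_self, map_bot]

theorem WellInside.map {F : Type*} [FunLike F α β] [FrameHomClass F α β] (f : F) {b a : α}
    (h : WellInside b a) : WellInside (f b) (f a) := by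
  refine top_le_iff.1 ?_
  calc ⊤ = f (bᶜ ⊔ a) := by rw [h, map_top]
    _ = f bᶜ ⊔ f a := map_sup f _ _
    _ ≤ (f b)ᶜ ⊔ f a := sup_le_sup_right (map_compl_le f b) _

end WellInside

section CompactRegular

variable {α β : Type*} [Order.Frame α] [CompleteLattice β]

theorem IsCompactFrame.exists_finset_wellInside (hc : IsCompactFrame α) {y : α} {D : Set α}
    (h : WellInside y (sSup D)) : ∃ s : Finset α, ↑s ⊆ D ∧ WellInside y (s.sup id) := by
  obtain ⟨T, hTD, hT, htop⟩ := hc (insert yᶜ D) (by rw [sSup_insert]; exact h.ge)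
  refine ⟨(hT.inter_of_left D).toFinset, by simp, top_le_iff.1 (htop.trans ?_)⟩
  rw [Finset.sup_id_eq_sSup, Set.Finite.coe_toFinset]
  refine sSup_le fun t ht => ?_
  rcases hTD ht with rfl | htD
  · exact le_sup_left
  · exact le_sup_of_le_right (le_sSup ⟨ht, htD⟩)

theorem IsRegularFrame.exists_wellInside_between (hc : IsCompactFrame α) (hr : IsRegularFrame α)
    {b a : α} (h : WellInside b a) : ∃ c, WellInside b c ∧ WellInside c a := by
  obtain ⟨s, hs, hbs⟩ := hc.exists_finset_wellInside (D := {c | WellInside c a}) (hr a ▸ h)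
  exact ⟨_, hbs, WellInside.finset_sup_left fun c hc => hs hc⟩

theorem IsRegularFrame.map_eq_sSup (hr : IsRegularFrame α) {F : Type*} [FunLike F α β]
    [sSupHomClass F α β] (f : F) (x : α) : f x = sSup (f '' {y | WellInside y x}) := by
  conv_lhs => rw [hr x]
  exact map_sSup f _

end CompactRegular

section Compactification

variable {M L L' : Type*} [Order.Frame M] [Order.Frame L] [Order.Frame L'] {k : FrameHom M L}

def MapWellInside (k : FrameHom M L) (p q : L) : Prop :=
  ∃ b a, WellInside b a ∧ p ≤ k b ∧ k a ≤ q

theorem le_of_map_le_of_wellInside (hd : ∀ a, k a = ⊥ → a = ⊥) {m b a : M} (hm : k m ≤ k b)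
    (h : WellInside b a) : m ≤ a := by
  have hdisj : k (m ⊓ bᶜ) = ⊥ := by
    refine le_bot_iff.1 ?_
    calc k (m ⊓ bᶜ) = k m ⊓ k bᶜ := map_inf k _ _
      _ ≤ k b ⊓ k bᶜ := inf_le_inf_right _ hm
      _ = ⊥ := by rw [← map_inf, inf_compl_self, map_bot]
  exact (le_compl_iff_disjoint_right.2 (disjoint_iff.2 (hd _ hdisj))).trans h.compl_compl_le

theorem map_compl_of_dense_of_surjective (hd : ∀ a, k a = ⊥ → a = ⊥)
    (hs : Function.Surjective k) (a : M) : k aᶜ = (k a)ᶜ := by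
  refine le_antisymm (map_compl_le k a) ?_
  obtain ⟨c, hc⟩ := hs (k a)ᶜ
  have hca : k (c ⊓ a) = ⊥ := by rw [map_inf, hc, compl_inf_self]
  rw [← hc]
  exact OrderHomClass.mono k (le_compl_iff_disjoint_right.2 (disjoint_iff.2 (hd _ hca)))

theorem mapWellInside_closedUnder15 (hd : ∀ a, k a = ⊥ → a = ⊥) (hs : Function.Surjective k) :
    ClosedUnder15 Set.univ (MapWellInside k) := by
  refine ⟨⟨⟨⊥, ⊥, wellInside_bot_left ⊥, by simp, by simp⟩,
    ⟨⊤, ⊤, wellInside_top_right ⊤, by simp, by simp⟩⟩, ?_, ?_, ?_, ?_⟩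
  · rintro x a b y - - hxa ⟨B, A, hBA, h₁, h₂⟩ hby
    exact ⟨B, A, hBA, hxa.trans h₁, h₂.trans hby⟩
  · rintro x a b ⟨B, A, hBA, h₁, h₂⟩ ⟨B', A', hBA', h₁', h₂'⟩
    exact ⟨B ⊓ B', A ⊓ A', hBA.inf hBA', by simpa using ⟨h₁, h₁'⟩,
      by simpa using inf_le_inf h₂ h₂'⟩
  · rintro x y a ⟨B, A, hBA, h₁, h₂⟩ ⟨B', A', hBA', h₁', h₂'⟩
    exact ⟨B ⊔ B', A ⊔ A', hBA.sup hBA', by simpa using sup_le_sup h₁ h₁',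
      by simpa using ⟨h₂, h₂'⟩⟩
  · rintro p q ⟨B, A, hBA, h₁, h₂⟩
    have hk := map_compl_of_dense_of_surjective hd hs
    exact ⟨Aᶜ, Bᶜ, hBA.compl, (compl_le_compl h₂).trans_eq (hk A).symm,
      (hk B).trans_le (compl_le_compl h₁)⟩

theorem MapWellInside.of_kIncl (hd : ∀ a, k a = ⊥ → a = ⊥) (hs : Function.Surjective k)
    {p q : L} (h : kIncl k p q) : MapWellInside k p q :=
  h _ (fun _ _ ⟨a, b, hba, hp, hq⟩ => ⟨b, a, hba, hp.le, hq.ge⟩)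
    (mapWellInside_closedUnder15 hd hs)

theorem Finer.mapWellInside (hd : ∀ a, k a = ⊥ → a = ⊥) (hs : Function.Surjective k)
    {f : FrameHom L' L} (hf : Finer (kIncl k) f) {x y : L'} (h : WellInside y x) :
    MapWellInside k (f y) (f x) := by
  obtain ⟨p, p', hyp, hpp', hpx⟩ := hf x y h
  obtain ⟨b, a, hba, hpb, hap⟩ := MapWellInside.of_kIncl hd hs hpp'
  exact ⟨b, a, hba, hyp.trans hpb, hap.trans hpx⟩

theorem finer_kIncl_self : Finer (kIncl k) k :=
  fun x y h => ⟨k y, k x, le_rfl, fun _ hR _ => hR _ _ ⟨x, y, h, rfl, rfl⟩, le_rfl⟩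

theorem exists_wellInside_finset_sup {ι : Type*} {s : Finset ι} {e : ι → L} {c : M}
    (h : ∀ i ∈ s, ∃ b a, WellInside b a ∧ e i ≤ k b ∧ a ≤ c) :
    ∃ b a, WellInside b a ∧ s.sup e ≤ k b ∧ a ≤ c := by
  refine Finset.sup_induction (p := fun p => ∃ b a, WellInside b a ∧ p ≤ k b ∧ a ≤ c)
    ⟨⊥, ⊥, wellInside_bot_left ⊥, bot_le, bot_le⟩ ?_ h
  rintro _ ⟨b₁, a₁, h₁, hp₁, ha₁⟩ _ ⟨b₂, a₂, h₂, hp₂, ha₂⟩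
  exact ⟨b₁ ⊔ b₂, a₁ ⊔ a₂, h₁.sup h₂, by simpa using sup_le_sup hp₁ hp₂, sup_le ha₁ ha₂⟩

end Compactification

namespace Compactification

variable {M L L' : Type*} [Order.Frame M] [Order.Frame L] [Order.Frame L']
  {k : FrameHom M L} {f : FrameHom L' L}

def extendFun (k : FrameHom M L) (f : FrameHom L' L) (x : L') : M :=
  sSup {m | ∃ y, WellInside y x ∧ k m ≤ f y}

theorem le_extendFun {x y : L'} {m : M} (h : WellInside y x) (hm : k m ≤ f y) :
    m ≤ extendFun k f x :=
  le_sSup ⟨y, h, hm⟩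

theorem extendFun_mono : Monotone (extendFun k f) :=
  fun _ _ hxx' => sSup_le_sSup fun _ ⟨y, hy, hm⟩ => ⟨y, hy.mono le_rfl hxx', hm⟩

theorem extendFun_top : extendFun k f ⊤ = ⊤ :=
  top_le_iff.1 (le_extendFun (wellInside_top_right ⊤) (by simp))

theorem extendFun_inf (x x' : L') :
    extendFun k f (x ⊓ x') = extendFun k f x ⊓ extendFun k f x' := by
  refine le_antisymm (le_inf (extendFun_mono inf_le_left) (extendFun_mono inf_le_right)) ?_
  rw [extendFun, extendFun, sSup_inf_sSup]
  refine iSup₂_le ?_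
  rintro ⟨m, m'⟩ ⟨⟨y, hy, hm⟩, ⟨y', hy', hm'⟩⟩
  exact le_extendFun (hy.inf hy') (by simpa using inf_le_inf hm hm')

theorem exists_wellInside_le_extendFun (hc : IsCompactFrame L') (hr : IsRegularFrame L')
    (hf : ∀ ⦃x y⦄, WellInside y x → MapWellInside k (f y) (f x)) {u x : L'}
    (h : WellInside u x) : ∃ b a, WellInside b a ∧ f u ≤ k b ∧ a ≤ extendFun k f x := by
  obtain ⟨z, huz, hzx⟩ := hr.exists_wellInside_between hc h
  obtain ⟨b, a, hba, hub, haz⟩ := hf huz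
  exact ⟨b, a, hba, hub, le_extendFun hzx haz⟩

theorem map_extendFun (hc : IsCompactFrame L') (hr : IsRegularFrame L')
    (hf : ∀ ⦃x y⦄, WellInside y x → MapWellInside k (f y) (f x)) (x : L') :
    k (extendFun k f x) = f x := by
  refine le_antisymm ?_ ?_
  · rw [extendFun, map_sSup]
    refine sSup_le ?_
    rintro _ ⟨m, ⟨y, hy, hm⟩, rfl⟩
    exact hm.trans (OrderHomClass.mono f hy.le)
  · rw [hr.map_eq_sSup f x]
    refine sSup_le ?_
    rintro _ ⟨u, hu, rfl⟩
    obtain ⟨b, a, hba, hub, ha⟩ := exists_wellInside_le_extendFun hc hr hf hu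
    exact hub.trans (OrderHomClass.mono k (hba.le.trans ha))

theorem extendFun_sSup (hd : ∀ a, k a = ⊥ → a = ⊥) (hc : IsCompactFrame L')
    (hr : IsRegularFrame L') (hf : ∀ ⦃x y⦄, WellInside y x → MapWellInside k (f y) (f x))
    (T : Set L') : extendFun k f (sSup T) = sSup (extendFun k f '' T) := by
  refine le_antisymm (sSup_le ?_) (sSup_le ?_)
  · rintro m ⟨y, hy, hm⟩
    have hT : sSup T ≤ sSup {u | ∃ t ∈ T, WellInside u t} :=
      sSup_le fun t ht => (hr t).le.trans (sSup_le fun u hu => le_sSup ⟨t, ht, hu⟩)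
    obtain ⟨s, hsD, hys⟩ := hc.exists_finset_wellInside (hy.mono le_rfl hT)
    obtain ⟨b, a, hba, hsb, ha⟩ := exists_wellInside_finset_sup
      (s := s) (e := f) (c := sSup (extendFun k f '' T)) fun u hu => by
      obtain ⟨t, ht, hut⟩ := hsD hu
      obtain ⟨b, a, hba, hub, ha⟩ := exists_wellInside_le_extendFun hc hr hf hut
      exact ⟨b, a, hba, hub, ha.trans (le_sSup ⟨t, ht, rfl⟩)⟩
    have hmb : k m ≤ k b := calc
      k m ≤ f y := hm
      _ ≤ f (s.sup id) := OrderHomClass.mono f hys.le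
      _ = s.sup f := map_finset_sup f s id
      _ ≤ k b := hsb
    exact (le_of_map_le_of_wellInside hd hmb hba).trans ha
  · rintro _ ⟨t, ht, rfl⟩
    exact extendFun_mono (le_sSup ht)

def extend (hd : ∀ a, k a = ⊥ → a = ⊥) (hc : IsCompactFrame L') (hr : IsRegularFrame L')
    (hf : ∀ ⦃x y⦄, WellInside y x → MapWellInside k (f y) (f x)) : FrameHom L' M where
  toFun := extendFun k f
  map_inf' := extendFun_inf
  map_top' := extendFun_top
  map_sSup' := extendFun_sSup hd hc hr hf

theorem comp_extend (hd : ∀ a, k a = ⊥ → a = ⊥) (hc : IsCompactFrame L')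
    (hr : IsRegularFrame L') (hf : ∀ ⦃x y⦄, WellInside y x → MapWellInside k (f y) (f x)) :
    k.comp (extend hd hc hr hf) = f :=
  DFunLike.ext _ _ (map_extendFun hc hr hf)

theorem eq_extendFun_of_comp_eq (hd : ∀ a, k a = ⊥ → a = ⊥) (hr : IsRegularFrame L')
    {g : FrameHom L' M} (hg : k.comp g = f) (x : L') : g x = extendFun k f x := by
  have hkg : ∀ y, k (g y) = f y := fun y => by rw [← hg]; rfl
  refine le_antisymm ?_ (sSup_le ?_)
  · rw [hr.map_eq_sSup g x]
    refine sSup_le ?_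
    rintro _ ⟨y, hy, rfl⟩
    exact le_extendFun hy (hkg y).le
  · rintro m ⟨y, hy, hm⟩
    exact le_of_map_le_of_wellInside hd (hm.trans (hkg y).ge) (hy.map g)

end Compactification

/-- Corollary 4.15 of the paper: a compactification `k : M → L` extends uniquely
every frame homomorphism in its associated class `Cₖ`, and it is the minimal
compactification with this extension property. -/
theorem compactification_extension_characterization
    {L M : Type u} [Order.Frame L] [Order.Frame M]
    (hMc : IsCompactFrame M) (hMr : IsRegularFrame M)
    (k : FrameHom M L) (hdense : ∀ a : M, k a = ⊥ → a = ⊥)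
    (hsurj : Function.Surjective k) :
    (∀ (L' : Type u) (_ : Order.Frame L'),
      IsCompactFrame L' → IsRegularFrame L' →
      ∀ f : FrameHom L' L, Finer (kIncl k) f →
        ∃! g : FrameHom L' M, f = k.comp g) ∧
    (∀ (M' : Type u) (_ : Order.Frame M'),
      IsCompactFrame M' → IsRegularFrame M' →
      ∀ k' : FrameHom M' L, (∀ a : M', k' a = ⊥ → a = ⊥) →
        Function.Surjective k' →
        (∀ (L' : Type u) (_ : Order.Frame L'),
          IsCompactFrame L' → IsRegularFrame L' →
          ∀ f : FrameHom L' L, Finer (kIncl k) f →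
            ∃ g' : FrameHom L' M', f = k'.comp g') →
        ∃ h : FrameHom M M', k = k'.comp h) := by
  refine ⟨fun L' _ hc hr f hf => ?_, fun M' _ _ _ k' _ _ hext => ?_⟩
  · have hf' : ∀ ⦃x y⦄, WellInside y x → MapWellInside k (f y) (f x) :=
      fun _ _ h => hf.mapWellInside hdense hsurj h
    refine ⟨Compactification.extend hdense hc hr hf',
      (Compactification.comp_extend hdense hc hr hf').symm, fun g hg => ?_⟩
    exact DFunLike.ext _ _ (Compactification.eq_extendFun_of_comp_eq hdense hr hg.symm)
  · exact hext M _ hMc hMr k finer_kIncl_self
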